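/- Let D₁, …, Dₙ be Prüfer v-multiplication domains and D := D₁ ∩ ⋯ ∩ Dₙ. Suppose D is essential with respect to {D₁, …, Dₙ}, i.e., the canonical representation {(Dᵢ)_q : q ∈ t-Spec(Dᵢ), 1 ≤ i ≤ n} of D is an essential representation (each member is a localization of D at a prime and their intersection is D). Then D is a Prüfer v-multiplication domain. -/

import Mathlib

open scoped nonZeroDivisors

/-- The localization of `R` at the prime `p`, viewed inside a field `K` to which `R` maps. -/
def locg {R K : Type*} [CommRing R] [Field K] [Algebra R K] (p : PrimeSpectrum R) :
    Subring K where
  carrier := {x : K | ∃ a b : R, b ∉ p.asIdeal ∧ x * algebraMap R K b = algebraMap R K a}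
  zero_mem' := ⟨0, 1, fun h => p.2.ne_top ((Ideal.eq_top_iff_one _).2 h), by simp⟩
  one_mem' := ⟨1, 1, fun h => p.2.ne_top ((Ideal.eq_top_iff_one _).2 h), by simp⟩
  add_mem' := by
    rintro x y ⟨a₁, b₁, hb₁, e₁⟩ ⟨a₂, b₂, hb₂, e₂⟩
    exact ⟨a₁ * b₂ + a₂ * b₁, b₁ * b₂,
      fun h => ((p.2.mem_or_mem h).elim hb₁ hb₂), by
        rw [map_add, map_mul, map_mul, map_mul]
        linear_combination (algebraMap R K b₂) * e₁ + (algebraMap R K b₁) * e₂⟩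
  mul_mem' := by
    rintro x y ⟨a₁, b₁, hb₁, e₁⟩ ⟨a₂, b₂, hb₂, e₂⟩
    exact ⟨a₁ * a₂, b₁ * b₂,
      fun h => ((p.2.mem_or_mem h).elim hb₁ hb₂), by
        rw [map_mul, map_mul, show x * y * (algebraMap R K b₁ * algebraMap R K b₂)
          = (x * algebraMap R K b₁) * (y * algebraMap R K b₂) by ring, e₁, e₂]⟩
  neg_mem' := by
    rintro x ⟨a, b, hb, e⟩
    exact ⟨-a, b, hb, by rw [map_neg, neg_mul, e]⟩
/-- `I` is a `t`-ideal: its `t`-closure is contained in (hence equal to) `I`. -/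
def IsTIdeal (R : Type*) [CommRing R] [IsDomain R] (I : Ideal R) : Prop :=
  ∀ x : R, (∃ J : Ideal R, J.FG ∧ J ≤ I ∧
    algebraMap R (FractionRing R) x ∈
      (1 / (1 / (J : FractionalIdeal R⁰ (FractionRing R))))) → x ∈ I

/-- `M` is a `t`-maximal ideal: maximal among proper `t`-ideals. -/
def IsTMax (R : Type*) [CommRing R] [IsDomain R] (M : Ideal R) : Prop :=
  IsTIdeal R M ∧ M ≠ ⊤ ∧ ∀ I : Ideal R, IsTIdeal R I → I ≠ ⊤ → M ≤ I → I = M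
/-- `R` is a Prüfer `v`-multiplication domain: the localization at every `t`-maximal
ideal is a valuation domain. -/
def IsPvMD (R : Type*) [CommRing R] [IsDomain R] : Prop :=
  ∀ M : Ideal R, IsTMax R M → ∀ hM : M.IsPrime,
    ValuationRing (locg (K := FractionRing R) ⟨M, hM⟩)

/-!
Let `R = ⋂ Dᵢ` and let `M` be a nonzero `t`-maximal ideal of `R` (for `M = 0` the localization is
the whole fraction field). If a nonzero finitely generated `J ⊆ M` lay in no `t`-prime `q` of any
`Dᵢ`, every `y` with `yJ ⊆ R` would lie in all the `(Dᵢ)_q`, hence in `R`; then `J⁻¹ = R`,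
`J_v = R` and `1 ∈ M`. As there are finitely many `Dᵢ`, a single index `i` serves every such `J`,
so `(M Dᵢ)_t` is a proper `t`-ideal and lies in a `t`-maximal, hence prime, ideal `N` of `Dᵢ`.
By essentiality `(Dᵢ)_N = R_P` is a valuation ring for some prime `P` of `R`, and `M ⊆ P` because
no element of `N` is a unit of `(Dᵢ)_N`. So `R_M` is an overring of the valuation ring `R_P`
inside its fraction field, hence a valuation ring.
-/

open FractionalIdeal IsLocalization

theorem Ideal.FG.exists_le_of_le_sSup {R : Type*} [Semiring R] {I : Ideal R} (hI : I.FG)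
    {s : Set (Ideal R)} (hs : s.Nonempty) (hdir : DirectedOn (· ≤ ·) s) (h : I ≤ sSup s) :
    ∃ J ∈ s, I ≤ J :=
  (CompleteLattice.isCompactElement_iff_le_of_directed_sSup_le _ I).mp
    ((Submodule.fg_iff_compact I).mp hI) s hs hdir h

theorem Ideal.sSup_ne_top {R : Type*} [Semiring R] {s : Set (Ideal R)} (hs : s.Nonempty)
    (hdir : DirectedOn (· ≤ ·) s) (h : ∀ I ∈ s, I ≠ ⊤) : sSup s ≠ ⊤ := fun htop => by
  obtain ⟨I, hIs, hI⟩ := Ideal.FG.exists_le_of_le_sSup ⟨{1}, by simp⟩ hs hdir htop.ge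
  exact h I hIs (top_le_iff.mp hI)

theorem Ideal.FG.exists_fg_le_of_le_sSup_image {R S : Type*} [Semiring R] [Semiring S]
    {g : Ideal R → Ideal S} (hg : Monotone g) {I : Ideal R} {J : Ideal S} (hJ : J.FG)
    (h : J ≤ sSup (g '' {J₀ : Ideal R | J₀.FG ∧ J₀ ≤ I})) :
    ∃ J₀ : Ideal R, J₀.FG ∧ J₀ ≤ I ∧ J ≤ g J₀ := by
  have hne : (g '' {J₀ : Ideal R | J₀.FG ∧ J₀ ≤ I}).Nonempty :=
    ⟨g ⊥, ⊥, ⟨Submodule.fg_bot, bot_le⟩, rfl⟩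
  have hdir : DirectedOn (· ≤ ·) (g '' {J₀ : Ideal R | J₀.FG ∧ J₀ ≤ I}) := by
    rintro _ ⟨J₁, ⟨hJ₁, hJ₁I⟩, rfl⟩ _ ⟨J₂, ⟨hJ₂, hJ₂I⟩, rfl⟩
    exact ⟨_, ⟨J₁ ⊔ J₂, ⟨Submodule.FG.sup hJ₁ hJ₂, sup_le hJ₁I hJ₂I⟩, rfl⟩,
      hg le_sup_left, hg le_sup_right⟩
  obtain ⟨_, ⟨J₀, hJ₀, rfl⟩, hJJ₀⟩ := hJ.exists_le_of_le_sSup hne hdir h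
  exact ⟨J₀, hJ₀.1, hJ₀.2, hJJ₀⟩

theorem Ideal.sSup_fg_le_eq {R : Type*} [CommSemiring R] (I : Ideal R) :
    sSup {J : Ideal R | J.FG ∧ J ≤ I} = I := by
  refine le_antisymm (sSup_le fun _ hJ => hJ.2) fun x hx => ?_
  have hx' : Ideal.span {x} ∈ {J : Ideal R | J.FG ∧ J ≤ I} :=
    ⟨Submodule.fg_span_singleton x, (Ideal.span_singleton_le_iff_mem I).mpr hx⟩
  exact Submodule.mem_sSup_of_mem hx' (Ideal.mem_span_singleton_self x)

theorem Ideal.exists_fg_le_map_of_fg_le_map {R S : Type*} [CommSemiring R] [Semiring S]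
    {f : R →+* S} {I : Ideal R} {J : Ideal S} (hJ : J.FG) (h : J ≤ I.map f) :
    ∃ J₀ : Ideal R, J₀.FG ∧ J₀ ≤ I ∧ J ≤ J₀.map f := by
  rw [← I.sSup_fg_le_eq, Ideal.map_sSup, ← sSup_image] at h
  exact hJ.exists_fg_le_of_le_sSup_image (fun _ _ => Ideal.map_mono) h

section TIdeal

variable {R : Type*} [CommRing R] [IsDomain R]

/-- The divisorial closure `J_v = (J⁻¹)⁻¹ ∩ R`. -/
noncomputable def divClosure (J : Ideal R) : Ideal R :=
  Submodule.comap (Algebra.linearMap R (FractionRing R))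
    ((1 / (1 / (J : FractionalIdeal R⁰ (FractionRing R))) : FractionalIdeal R⁰ (FractionRing R)) :
      Submodule R (FractionRing R))

theorem mem_divClosure {J : Ideal R} {x : R} :
    x ∈ divClosure J ↔
      algebraMap R (FractionRing R) x ∈ 1 / (1 / (J : FractionalIdeal R⁰ (FractionRing R))) :=
  Iff.rfl

theorem isTIdeal_iff {I : Ideal R} :
    IsTIdeal R I ↔ ∀ J : Ideal R, J.FG → J ≤ I → divClosure J ≤ I :=
  ⟨fun h J hJ hJI x hx => h x ⟨J, hJ, hJI, hx⟩, fun h _ ⟨J, hJ, hJI, hx⟩ => h J hJ hJI hx⟩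

@[simp]
theorem divClosure_bot : divClosure (⊥ : Ideal R) = ⊥ := by
  ext x
  simp [mem_divClosure, FractionalIdeal.div_zero]

theorem mem_divClosure_iff {J : Ideal R} (hJ : J ≠ ⊥) {x : R} :
    x ∈ divClosure J ↔ ∀ y : FractionRing R,
      (∀ j ∈ J, IsInteger R (y * algebraMap R _ j)) → IsInteger R (y * algebraMap R _ x) := by
  have hJ0 : (J : FractionalIdeal R⁰ (FractionRing R)) ≠ 0 := coeIdeal_ne_zero.mpr hJ
  have hdual : ∀ y, y ∈ 1 / (J : FractionalIdeal R⁰ (FractionRing R)) ↔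
      ∀ j ∈ J, IsInteger R (y * algebraMap R _ j) := by
    intro y
    simp [mem_div_iff_of_ne_zero hJ0, mem_coeIdeal, mem_one_iff, IsInteger]
  have hdual0 : 1 / (J : FractionalIdeal R⁰ (FractionRing R)) ≠ 0 := fun h => by
    simpa [h] using (hdual 1).mpr fun j _ => ⟨j, by simp⟩
  simp [mem_divClosure, mem_div_iff_of_ne_zero hdual0, hdual, mem_one_iff, IsInteger, mul_comm]

theorem le_divClosure (J : Ideal R) : J ≤ divClosure J := by
  rcases eq_or_ne J ⊥ with rfl | hJ
  · exact bot_le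
  exact fun x hx => (mem_divClosure_iff hJ).mpr fun y hy => hy x hx

theorem divClosure_le_divClosure {J J' : Ideal R} (h : J' ≤ divClosure J) :
    divClosure J' ≤ divClosure J := by
  rcases eq_or_ne J' ⊥ with rfl | hJ'
  · simp
  rcases eq_or_ne J ⊥ with rfl | hJ
  · exact absurd (le_bot_iff.mp (divClosure_bot (R := R) ▸ h)) hJ'
  exact fun x hx => (mem_divClosure_iff hJ).mpr fun y hy =>
    (mem_divClosure_iff hJ').mp hx y fun j hj => (mem_divClosure_iff hJ).mp (h hj) y hy

theorem divClosure_mono {J J' : Ideal R} (h : J ≤ J') : divClosure J ≤ divClosure J' :=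
  divClosure_le_divClosure (h.trans (le_divClosure J'))

theorem mul_mem_divClosure_mul_span_singleton {J : Ideal R} {x : R} (hx : x ∈ divClosure J)
    (b : R) : x * b ∈ divClosure (J * Ideal.span {b}) := by
  rcases eq_or_ne J ⊥ with rfl | hJ
  · simp_all
  rcases eq_or_ne b 0 with rfl | hb
  · simp
  have hJb : J * Ideal.span {b} ≠ ⊥ := by simp [hJ, hb]
  rw [mem_divClosure_iff hJb]
  intro y hy
  have := (mem_divClosure_iff hJ).mp hx (y * algebraMap R _ b) fun j hj => by
    convert hy (j * b) (Ideal.mul_mem_mul hj (Ideal.mem_span_singleton_self b)) using 1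
    rw [map_mul]; ring
  convert this using 1
  rw [map_mul]; ring

theorem divClosure_eq_top_of_forall_mem {K : Type*} [Field K] {A : Subring K} {J : Ideal A}
    (hJ : J ≠ ⊥) (h : ∀ y : K, (∀ j ∈ J, y * j ∈ A) → y ∈ A) : divClosure J = ⊤ := by
  let φ : FractionRing A →+* K := IsFractionRing.lift (g := A.subtype) Subtype.val_injective
  have hφ (a : A) : φ (algebraMap A _ a) = a := IsFractionRing.lift_algebraMap _ a
  rw [Ideal.eq_top_iff_one, mem_divClosure_iff hJ]
  intro y hy
  have hyA : φ y ∈ A := h (φ y) fun j hj => by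
    obtain ⟨r, hr⟩ := hy j hj
    rw [← hφ j, ← map_mul, ← hr, hφ]
    exact r.2
  refine ⟨⟨φ y, hyA⟩, φ.injective ?_⟩
  simp [hφ]

/-- The `t`-closure `I_t`, the (directed) union of the `J_v` over finitely generated `J ⊆ I`. -/
noncomputable def tClosure (I : Ideal R) : Ideal R :=
  sSup (divClosure '' {J : Ideal R | J.FG ∧ J ≤ I})

theorem le_tClosure (I : Ideal R) : I ≤ tClosure I := by
  conv_lhs => rw [← I.sSup_fg_le_eq]
  exact sSup_le fun J hJ => (le_divClosure J).trans (le_sSup ⟨J, hJ, rfl⟩)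

theorem exists_le_divClosure_of_fg_le_tClosure {I J : Ideal R} (hJ : J.FG)
    (h : J ≤ tClosure I) : ∃ J₀ : Ideal R, J₀.FG ∧ J₀ ≤ I ∧ J ≤ divClosure J₀ :=
  hJ.exists_fg_le_of_le_sSup_image (fun _ _ => divClosure_mono) h

theorem isTIdeal_tClosure (I : Ideal R) : IsTIdeal R (tClosure I) := by
  refine isTIdeal_iff.mpr fun J hJ hJI => ?_
  obtain ⟨J₀, hJ₀, hJ₀I, hJJ₀⟩ := exists_le_divClosure_of_fg_le_tClosure hJ hJI
  exact (divClosure_le_divClosure hJJ₀).trans (le_sSup ⟨J₀, ⟨hJ₀, hJ₀I⟩, rfl⟩)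

theorem tClosure_map_ne_top {S : Type*} [CommRing S] {f : S →+* R} {I : Ideal S}
    (h : ∀ J : Ideal S, J.FG → J ≤ I → divClosure (J.map f) ≠ ⊤) : tClosure (I.map f) ≠ ⊤ := by
  intro htop
  obtain ⟨J, hJ, hJI, hJtop⟩ := exists_le_divClosure_of_fg_le_tClosure ⟨{1}, by simp⟩ htop.ge
  obtain ⟨J₀, hJ₀, hJ₀I, hJJ₀⟩ := Ideal.exists_fg_le_map_of_fg_le_map hJ hJI
  exact h J₀ hJ₀ hJ₀I (top_le_iff.mp (hJtop.trans (divClosure_mono hJJ₀)))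

theorem IsTIdeal.sSup {s : Set (Ideal R)} (hs : s.Nonempty) (hdir : DirectedOn (· ≤ ·) s)
    (h : ∀ I ∈ s, IsTIdeal R I) : IsTIdeal R (sSup s) := by
  refine isTIdeal_iff.mpr fun J hJ hJs => ?_
  obtain ⟨I, hIs, hJI⟩ := hJ.exists_le_of_le_sSup hs hdir hJs
  exact (isTIdeal_iff.mp (h I hIs) J hJ hJI).trans (le_sSup hIs)

theorem exists_isTMax_le {I : Ideal R} (hI : IsTIdeal R I) (hItop : I ≠ ⊤) :
    ∃ M, IsTMax R M ∧ I ≤ M := by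
  obtain ⟨M, hIM, hM⟩ := zorn_le_nonempty₀ {J : Ideal R | IsTIdeal R J ∧ J ≠ ⊤}
    (fun c hc hchain J hJ => ⟨sSup c,
      ⟨IsTIdeal.sSup ⟨J, hJ⟩ hchain.directedOn fun I hI => (hc hI).1,
        Ideal.sSup_ne_top ⟨J, hJ⟩ hchain.directedOn fun I hI => (hc hI).2⟩,
      fun _ => le_sSup⟩)
    I ⟨hI, hItop⟩
  exact ⟨M, ⟨hM.1.1, hM.1.2, fun J hJ hJtop hMJ => le_antisymm (hM.2 ⟨hJ, hJtop⟩ hMJ) hMJ⟩, hIM⟩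

theorem IsTIdeal.colon_span_singleton {I : Ideal R} (hI : IsTIdeal R I) (b : R) :
    IsTIdeal R (I.colon (Ideal.span {b})) := by
  rintro x ⟨J, hJ, hJI, hx⟩
  rw [Ideal.mem_colon_span_singleton]
  refine hI _ ⟨J * Ideal.span {b}, Submodule.FG.mul hJ (Submodule.fg_span_singleton b), ?_,
    mul_mem_divClosure_mul_span_singleton hx b⟩
  rw [Ideal.mul_le]
  intro r hr s hs
  obtain ⟨t, rfl⟩ := Ideal.mem_span_singleton'.mp hs
  simpa [mul_left_comm] using I.mul_mem_left t (Ideal.mem_colon_span_singleton.mp (hJI hr))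

theorem IsTMax.isPrime {M : Ideal R} (hM : IsTMax R M) : M.IsPrime := by
  refine Ideal.isPrime_iff.mpr ⟨hM.2.1, fun {a b} hab => or_iff_not_imp_right.mpr fun hb => ?_⟩
  have hMb : M ≤ M.colon (Ideal.span {b}) := fun x hx =>
    Ideal.mem_colon_span_singleton.mpr (M.mul_mem_right b hx)
  have hbtop : M.colon (Ideal.span {b}) ≠ ⊤ := fun h => hb <| by
    simpa using Ideal.mem_colon_span_singleton.mp (h ▸ Submodule.mem_top : (1 : R) ∈ _)
  rw [← hM.2.2 _ (hM.1.colon_span_singleton b) hbtop hMb]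
  exact Ideal.mem_colon_span_singleton.mpr hab

end TIdeal

namespace Subring

variable {K : Type*} [Field K]

theorem dvd_iff_div_mem {B : Subring K} {x y : B} (hx : (x : K) ≠ 0) :
    x ∣ y ↔ (y : K) / x ∈ B := by
  refine ⟨fun ⟨c, hc⟩ => ?_, fun h => ⟨⟨_, h⟩, Subtype.ext ?_⟩⟩
  · simp [hc, mul_div_cancel_left₀ _ hx]
  · simp [mul_div_cancel₀ _ hx]

/-- The case `x = 0` or `y = 0` is harmless because `x / 0 = 0`. -/
theorem valuationRing_iff (B : Subring K) :
    ValuationRing B ↔ ∀ x ∈ B, ∀ y ∈ B, x / y ∈ B ∨ y / x ∈ B := by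
  rw [ValuationRing.iff_dvd_total]
  refine ⟨fun h x hx y hy => ?_, fun h => ⟨fun x y => ?_⟩⟩
  · have key (u v : B) : u ∣ v → (v : K) / u ∈ B := fun huv => by
      rcases eq_or_ne (u : K) 0 with hu | hu
      · simp [hu]
      · exact (dvd_iff_div_mem hu).mp huv
    exact ((h.total ⟨x, hx⟩ ⟨y, hy⟩).imp (key _ _) (key _ _)).symm
  · rcases eq_or_ne x 0 with rfl | hx
    · exact Or.inr (dvd_zero y)
    rcases eq_or_ne y 0 with rfl | hy
    · exact Or.inl (dvd_zero x)
    exact (h x x.2 y y.2).symm.imp (dvd_iff_div_mem (by simpa using hx)).mpr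
      (dvd_iff_div_mem (by simpa using hy)).mpr

theorem valuationRing_comap {L : Type*} [Field L] (f : K →+* L) (B : Subring L)
    [ValuationRing B] : ValuationRing (B.comap f) := by
  have hB := (valuationRing_iff B).mp ‹_›
  exact (valuationRing_iff _).mpr fun x hx y hy => by
    simpa [Subring.mem_comap, map_div₀] using hB _ hx _ hy

theorem valuationRing_of_le {A B : Subring K} [ValuationRing A] (hAB : A ≤ B)
    (hB : ∀ x ∈ B, ∃ a ∈ A, ∃ b ∈ A, x = a / b) : ValuationRing B := by
  have hA := (valuationRing_iff A).mp ‹_›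
  refine (valuationRing_iff B).mpr fun x hx y hy => ?_
  obtain ⟨a₁, ha₁, b₁, hb₁, rfl⟩ := hB x hx
  obtain ⟨a₂, ha₂, b₂, hb₂, rfl⟩ := hB y hy
  rw [div_div_div_eq, div_div_div_eq, mul_comm a₂, mul_comm b₂]
  exact (hA _ (A.mul_mem ha₁ hb₂) _ (A.mul_mem hb₁ ha₂)).imp (hAB ·) (hAB ·)

end Subring

section Locg

theorem mem_locg {R K : Type*} [CommRing R] [Field K] [Algebra R K] {p : PrimeSpectrum R}
    {x : K} : x ∈ locg p ↔ ∃ a b : R, b ∉ p.asIdeal ∧ x * algebraMap R K b = algebraMap R K a :=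
  Iff.rfl

theorem algebraMap_mem_locg {R K : Type*} [CommRing R] [Field K] [Algebra R K]
    (p : PrimeSpectrum R) (a : R) : algebraMap R K a ∈ locg p :=
  ⟨a, 1, p.2.ne_top ∘ (Ideal.eq_top_iff_one _).mpr, by simp⟩

theorem locg_le_locg {R K : Type*} [CommRing R] [Field K] [Algebra R K] {p q : PrimeSpectrum R}
    (h : p.asIdeal ≤ q.asIdeal) : locg (K := K) q ≤ locg p :=
  fun _ ⟨a, b, hb, e⟩ => ⟨a, b, fun hbp => hb (h hbp), e⟩

theorem locg_eq_comap {R K L : Type*} [CommRing R] [Field K] [Field L] [Algebra R K]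
    [Algebra R L] (f : K →+* L) (hf : ∀ r, f (algebraMap R K r) = algebraMap R L r)
    (p : PrimeSpectrum R) : locg (K := K) p = (locg (K := L) p).comap f := by
  ext z
  simp only [Subring.mem_comap, mem_locg, ← hf, ← map_mul, f.injective.eq_iff]

theorem valuationRing_locg_of_asIdeal_eq_bot {R : Type*} [CommRing R] [IsDomain R]
    {p : PrimeSpectrum R} (hp : p.asIdeal = ⊥) : ValuationRing (locg (K := FractionRing R) p) := by
  have hmem (x : FractionRing R) : x ∈ locg p := by
    obtain ⟨a, b, hb, rfl⟩ := IsFractionRing.div_surjective (A := R) x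
    exact ⟨a, b, by simpa [hp] using nonZeroDivisors.ne_zero hb,
      div_mul_cancel₀ _ (IsFractionRing.to_map_ne_zero_of_mem_nonZeroDivisors hb)⟩
  exact (Subring.valuationRing_iff _).mpr fun x _ _ _ => Or.inl (hmem _)

variable {K : Type*} [Field K] {S : Subring K}

theorem mem_locg_of_mul_mem {p : PrimeSpectrum S} {y : K} {s : S} (hs : s ∉ p.asIdeal)
    (hys : y * s ∈ S) : y ∈ locg p :=
  ⟨⟨_, hys⟩, s, hs, rfl⟩

theorem inv_mem_locg_iff {p : PrimeSpectrum S} {x : S} (hx : (x : K) ≠ 0) :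
    (x : K)⁻¹ ∈ locg p ↔ x ∉ p.asIdeal := by
  refine ⟨fun ⟨a, b, hb, e⟩ hxp => hb ?_, fun hxp => mem_locg_of_mul_mem hxp (by simp [hx])⟩
  have e : (x : K)⁻¹ * b = a := e
  have hb : b = a * x := Subtype.ext <| by
    rw [Subring.coe_mul, ← e]
    field_simp
  exact hb ▸ p.asIdeal.mul_mem_left a hxp

theorem comap_le_of_locg_le {A : Subring K} (hAS : A ≤ S) {p : PrimeSpectrum A}
    {N : PrimeSpectrum S} (h : locg (K := K) p ≤ locg N) :
    N.asIdeal.comap (Subring.inclusion hAS) ≤ p.asIdeal := by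
  intro x hxN
  by_contra hxp
  have hx : (x : K) ≠ 0 := by simpa using fun hx0 : x = 0 => hxp (hx0 ▸ zero_mem _)
  exact (inv_mem_locg_iff (x := Subring.inclusion hAS x) hx).mp
    (h ((inv_mem_locg_iff hx).mpr hxp)) hxN

theorem valuationRing_locg_of_le {p M : PrimeSpectrum S} (h : M.asIdeal ≤ p.asIdeal)
    [ValuationRing (locg (K := K) p)] : ValuationRing (locg (K := K) M) := by
  refine Subring.valuationRing_of_le (locg_le_locg h) fun x ⟨a, b, hb, e⟩ =>
    ⟨a, algebraMap_mem_locg p a, b, algebraMap_mem_locg p b, eq_div_of_mul_eq ?_ e⟩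
  simpa using fun hb0 : b = 0 => hb (hb0 ▸ zero_mem _)

theorem valuationRing_locg_fractionRing (p : PrimeSpectrum S) [ValuationRing (locg (K := K) p)] :
    ValuationRing (locg (K := FractionRing S) p) := by
  rw [locg_eq_comap (IsFractionRing.lift (g := S.subtype) Subtype.val_injective)
    (IsFractionRing.lift_algebraMap _)]
  exact Subring.valuationRing_comap _ _

end Locg

section EssentialIntersection

variable {K : Type*} [Field K] {ι : Type*} {D : ι → Subring K}

theorem exists_divClosure_map_ne_top
    (hint : (⨅ i, ⨅ q : PrimeSpectrum ↥(D i), ⨅ _ : IsTIdeal ↥(D i) q.asIdeal,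
      locg (K := K) q) ≤ ⨅ i, D i)
    {M : Ideal ↥(⨅ i, D i)} (hM : IsTIdeal _ M) (hMtop : M ≠ ⊤) {J : Ideal ↥(⨅ i, D i)}
    (hJ : J.FG) (hJM : J ≤ M) (hJ0 : J ≠ ⊥) :
    ∃ i, divClosure (J.map (Subring.inclusion (iInf_le D i))) ≠ ⊤ := by
  by_contra! htop
  have hJinv (y : K) (hy : ∀ j ∈ J, y * j ∈ ⨅ i, D i) : y ∈ ⨅ i, D i := hint <| by
    simp only [Subring.mem_iInf]
    intro i q hq
    have hJq : ¬ J.map (Subring.inclusion (iInf_le D i)) ≤ q.asIdeal := fun hle =>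
      q.2.ne_top (top_le_iff.mp ((htop i).ge.trans (isTIdeal_iff.mp hq _ (hJ.map _) hle)))
    obtain ⟨j, hj, hjq⟩ := SetLike.not_le_iff_exists.mp (mt Ideal.map_le_iff_le_comap.mpr hJq)
    exact mem_locg_of_mul_mem hjq (iInf_le D i (hy j hj))
  have hJv : divClosure J = ⊤ := divClosure_eq_top_of_forall_mem hJ0 hJinv
  exact hMtop (top_le_iff.mp (hJv ▸ isTIdeal_iff.mp hM J hJ hJM))

theorem exists_forall_divClosure_map_ne_top [Finite ι]
    (hint : (⨅ i, ⨅ q : PrimeSpectrum ↥(D i), ⨅ _ : IsTIdeal ↥(D i) q.asIdeal,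
      locg (K := K) q) ≤ ⨅ i, D i)
    {M : Ideal ↥(⨅ i, D i)} (hM : IsTIdeal _ M) (hMtop : M ≠ ⊤) (hM0 : M ≠ ⊥) :
    ∃ i, ∀ J : Ideal ↥(⨅ i, D i), J.FG → J ≤ M →
      divClosure (J.map (Subring.inclusion (iInf_le D i))) ≠ ⊤ := by
  by_contra! h
  choose J hJ hJM hJtop using h
  obtain ⟨x, hxM, hx0⟩ := Submodule.exists_mem_ne_zero_of_ne_bot hM0
  have hJne : Ideal.span {x} ⊔ ⨆ i, J i ≠ ⊥ :=
    ne_bot_of_le_ne_bot (Ideal.span_singleton_eq_bot.not.mpr hx0) le_sup_left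
  obtain ⟨i, hi⟩ := exists_divClosure_map_ne_top hint hM hMtop
    (Submodule.FG.sup (Submodule.fg_span_singleton x) (Submodule.fg_iSup _ hJ))
    (sup_le ((Ideal.span_singleton_le_iff_mem M).mpr hxM) (iSup_le hJM)) hJne
  exact hi (top_le_iff.mp ((hJtop i).ge.trans
    (divClosure_mono (Ideal.map_mono ((le_iSup J i).trans le_sup_right)))))

end EssentialIntersection

theorem isPvMD_of_finite_essential_intersection_general {K : Type*} [Field K] (n : ℕ)
    (D : Fin n → Subring K)
    (hloc : ∀ i, ∀ q : PrimeSpectrum ↥(D i), IsTIdeal ↥(D i) q.asIdeal →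
      ValuationRing ↥(locg (K := K) q) ∧
        ∃ p : PrimeSpectrum ↥(⨅ i, D i), locg (K := K) q = locg (K := K) p)
    (hint : (⨅ i, ⨅ q : PrimeSpectrum ↥(D i), ⨅ _ : IsTIdeal ↥(D i) q.asIdeal,
      locg (K := K) q) = ⨅ i, D i) :
    IsPvMD ↥(⨅ i, D i) := by
  intro M hM hMprime
  rcases eq_or_ne M ⊥ with rfl | hM0
  · exact valuationRing_locg_of_asIdeal_eq_bot rfl
  obtain ⟨i, hi⟩ := exists_forall_divClosure_map_ne_top hint.le hM.1 hM.2.1 hM0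
  obtain ⟨N, hN, hMN⟩ := exists_isTMax_le (isTIdeal_tClosure _) (tClosure_map_ne_top hi)
  obtain ⟨hV, p, hNp⟩ := hloc i ⟨N, hN.isPrime⟩ hN.1
  have hMp : M ≤ p.asIdeal := (Ideal.map_le_iff_le_comap.mp ((le_tClosure _).trans hMN)).trans
    (comap_le_of_locg_le _ hNp.ge)
  rw [hNp] at hV
  have := valuationRing_locg_of_le (M := ⟨M, hMprime⟩) hMp
  exact valuationRing_locg_fractionRing _

theorem isPvMD_of_finite_essential_intersection {K : Type*} [Field K] (n : ℕ)
    (D : Fin n → Subring K) (hD : ∀ i, IsPvMD ↥(D i))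
    (hloc : ∀ i, ∀ q : PrimeSpectrum ↥(D i), IsTIdeal ↥(D i) q.asIdeal →
      ValuationRing ↥(locg (K := K) q) ∧
        ∃ p : PrimeSpectrum ↥(⨅ i, D i), locg (K := K) q = locg (K := K) p)
    (hint : (⨅ i, ⨅ q : PrimeSpectrum ↥(D i), ⨅ _ : IsTIdeal ↥(D i) q.asIdeal,
      locg (K := K) q) = ⨅ i, D i) :
    IsPvMD ↥(⨅ i, D i) :=
  isPvMD_of_finite_essential_intersection_general n D hloc hint
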